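/- arXiv:2108.00728 — 2 statements merged into one kernel-verified Lean document; each statement's English description precedes it below -/
import Mathlib

section
/- For a real n×n matrix A, sup over nonnegative integers t of the operator norm of A^t is finite if and only if every root of the minimal polynomial of A either lies strictly inside the unit circle, or lies on the unit circle and is a simple root. -/
open Polynomial Matrix

attribute [local instance] Matrix.linftyOpNormedAddCommGroup

section AuxiliaryLemmas

open Finset

variable {n : ℕ}

lemma chooseBdd (k : ℕ) {x : ℝ} (h0 : 0 ≤ x) (h1 : x < 1) :
    ∃ c : ℝ, ∀ t : ℕ, (t.choose k : ℝ) * x ^ (t - k) ≤ c := by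
  have hsum : Summable (fun s : ℕ => (((s + k).choose k : ℝ)) * x ^ s) :=
    summable_choose_mul_geometric_of_norm_lt_one k
      (by rwa [Real.norm_eq_abs, abs_of_nonneg h0])
  obtain ⟨c, hc⟩ := hsum.tendsto_atTop_zero.bddAbove_range
  refine ⟨max c 0, fun t => ?_⟩
  rcases le_or_gt k t with hkt | hkt
  · have h : (t.choose k : ℝ) * x ^ (t - k) = (((t - k) + k).choose k : ℝ) * x ^ (t - k) := by
      rw [Nat.sub_add_cancel hkt]
    rw [h]
    exact le_max_of_le_left (hc (Set.mem_range_self (t - k)))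
  · rw [Nat.choose_eq_zero_of_lt hkt]
    simp

section RingInst
attribute [local instance] Matrix.linftyOpNormedAddCommGroup Matrix.linftyOpNormedRing
  Matrix.linftyOpNormedAlgebra


lemma singleFactor (B : Matrix (Fin n) (Fin n) ℂ) (μ : ℂ) (m : ℕ)
    (hk : ∀ k : ℕ, ∃ c : ℝ, ∀ t : ℕ, k < m → (t.choose k : ℝ) * ‖μ‖ ^ (t - k) ≤ c)
    (g : ℂ[X]) (hg : aeval B ((X - Polynomial.C μ) ^ m * g) = 0) :
    ∃ c : ℝ, ∀ t : ℕ, ‖B ^ t * aeval B g‖ ≤ c := by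
  choose c hc using hk
  set E : ℕ → Matrix (Fin n) (Fin n) ℂ := fun k => aeval B ((X - Polynomial.C μ) ^ k * g) with hE
  have hE0 : ∀ k, m ≤ k → E k = 0 := by
    intro k hkm
    have h : (X - Polynomial.C μ) ^ k * g
        = (X - Polynomial.C μ) ^ (k - m) * ((X - Polynomial.C μ) ^ m * g) := by
      rw [← mul_assoc, ← pow_add, Nat.sub_add_cancel hkm]
    show aeval B ((X - Polynomial.C μ) ^ k * g) = 0
    rw [h, _root_.map_mul, hg, mul_zero]
  have key : ∀ t : ℕ, B ^ t * aeval B g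
      = ∑ k ∈ range (t + 1), ((t.choose k : ℂ) * μ ^ (t - k)) • E k := by
    intro t
    have hXt : (X : ℂ[X]) ^ t * g
        = ∑ k ∈ range (t + 1),
            Polynomial.C ((t.choose k : ℂ) * μ ^ (t - k)) * ((X - Polynomial.C μ) ^ k * g) := by
      conv_lhs => rw [show (X : ℂ[X]) = (X - Polynomial.C μ) + Polynomial.C μ by ring, add_pow]
      rw [Finset.sum_mul]
      refine Finset.sum_congr rfl fun k hkr => ?_
      simp only [_root_.map_mul, map_pow, map_natCast]
      ring
    have hterm : ∀ k, aeval B (Polynomial.C ((t.choose k : ℂ) * μ ^ (t - k)) *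
        ((X - Polynomial.C μ) ^ k * g)) = ((t.choose k : ℂ) * μ ^ (t - k)) • E k := by
      intro k
      rw [_root_.map_mul, aeval_C, ← Algebra.smul_def]
    rw [show B ^ t = aeval B (X ^ t) from
        (by rw [_root_.map_pow, aeval_X] : aeval B ((X : ℂ[X]) ^ t) = B ^ t).symm,
      ← _root_.map_mul (aeval B) (X ^ t) g, hXt, map_sum]
    exact Finset.sum_congr rfl fun k _ => hterm k
  refine ⟨∑ k ∈ range m, c k * ‖E k‖, fun t => ?_⟩
  rw [key t]
  have hsub : ∑ k ∈ range (t + 1), ((t.choose k : ℂ) * μ ^ (t - k)) • E k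
      = ∑ k ∈ range (min (t + 1) m), ((t.choose k : ℂ) * μ ^ (t - k)) • E k := by
    refine (Finset.sum_subset (Finset.range_subset_range.2 (min_le_left _ _)) fun k hk1 hk2 => ?_).symm
    simp only [Finset.mem_range] at hk1 hk2
    have : m ≤ k := by omega
    rw [hE0 k this, smul_zero]
  rw [hsub]
  calc ‖∑ k ∈ range (min (t + 1) m), ((t.choose k : ℂ) * μ ^ (t - k)) • E k‖
      ≤ ∑ k ∈ range (min (t + 1) m), ‖((t.choose k : ℂ) * μ ^ (t - k)) • E k‖ :=
        norm_sum_le _ _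
    _ ≤ ∑ k ∈ range (min (t + 1) m), c k * ‖E k‖ := by
        refine Finset.sum_le_sum fun k hkr => ?_
        simp only [Finset.mem_range, lt_min_iff] at hkr
        rw [norm_smul]
        have habs : ‖(t.choose k : ℂ) * μ ^ (t - k)‖ = (t.choose k : ℝ) * ‖μ‖ ^ (t - k) := by
          simp [norm_mul, norm_pow, Complex.norm_natCast]
        rw [habs]
        exact mul_le_mul_of_nonneg_right (hc k t hkr.2) (norm_nonneg _)
    _ ≤ ∑ k ∈ range m, c k * ‖E k‖ := by
        refine Finset.sum_le_sum_of_subset_of_nonneg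
          (Finset.range_subset_range.2 (min_le_right _ _)) fun k hkr _ => ?_
        simp only [Finset.mem_range] at hkr
        have h1 : (1 : ℝ) ≤ c k := by
          have := hc k k hkr
          simpa using this
        positivity


lemma constCase (B : Matrix (Fin n) (Fin n) ℂ) {p : ℂ[X]} (hdeg : p.natDegree = 0)
    (hp0 : p ≠ 0) (g : ℂ[X]) (hg : aeval B (p * g) = 0) :
    ∃ c : ℝ, ∀ t : ℕ, ‖B ^ t * aeval B g‖ ≤ c := by
  have hpC : p = Polynomial.C (p.coeff 0) := eq_C_of_natDegree_eq_zero hdeg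
  have hc0 : p.coeff 0 ≠ 0 := fun h => hp0 (by rw [hpC, h, map_zero])
  have hg0 : aeval B g = 0 := by
    have : aeval B (p * g) = p.coeff 0 • aeval B g := by
      nth_rewrite 1 [hpC]
      rw [_root_.map_mul, aeval_C, ← Algebra.smul_def]
    rw [this] at hg
    exact (smul_eq_zero.1 hg).resolve_left hc0
  exact ⟨0, fun t => by rw [hg0, mul_zero]; simp⟩

lemma matrixBound (B : Matrix (Fin n) (Fin n) ℂ) (d : ℕ) :
    ∀ p : ℂ[X], p.natDegree ≤ d → p ≠ 0 →
    (∀ z : ℂ, p.IsRoot z →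
      ‖z‖ < 1 ∨ (‖z‖ = 1 ∧ p.rootMultiplicity z = 1)) →
    ∀ g : ℂ[X], aeval B (p * g) = 0 → ∃ c : ℝ, ∀ t : ℕ, ‖B ^ t * aeval B g‖ ≤ c := by
  induction d with
  | zero =>
    intro p hdeg hp0 _ g hg
    exact constCase B (Nat.le_zero.1 hdeg) hp0 g hg
  | succ d ih =>
    intro p hdeg hp0 hroot g hg
    by_cases h0 : p.natDegree = 0
    · exact constCase B h0 hp0 g hg
    -- p has a root μ
    obtain ⟨μ, hμ⟩ : ∃ z : ℂ, p.IsRoot z :=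
      Complex.exists_root (natDegree_pos_iff_degree_pos.1 (Nat.pos_of_ne_zero h0))
    set m : ℕ := p.rootMultiplicity μ with hm
    have hm1 : 0 < m := (rootMultiplicity_pos hp0).2 hμ
    set r : ℂ[X] := p /ₘ (X - Polynomial.C μ) ^ m with hr
    have hfac : (X - Polynomial.C μ) ^ m * r = p :=
      pow_mul_divByMonic_rootMultiplicity_eq p μ
    have hrμ : ¬ r.IsRoot μ := by
      have := eval_divByMonic_pow_rootMultiplicity_ne_zero μ hp0
      exact this
    have hr0 : r ≠ 0 := by
      intro h
      rw [h, mul_zero] at hfac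
      exact hp0 hfac.symm
    have hXm0 : ((X - Polynomial.C μ) ^ m : ℂ[X]) ≠ 0 :=
      pow_ne_zero _ (X_sub_C_ne_zero μ)
    have hdegsum : m + r.natDegree = p.natDegree := by
      have := natDegree_mul hXm0 hr0
      rw [hfac] at this
      rw [natDegree_pow, natDegree_X_sub_C, mul_one] at this
      omega
    have hcop : IsCoprime ((X - Polynomial.C μ) ^ m) r :=
      ((irreducible_X_sub_C μ).coprime_iff_not_dvd.2
        fun hdvd => hrμ (dvd_iff_isRoot.1 hdvd)).pow_left
    obtain ⟨u, v, huv⟩ := hcop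
    -- splitting
    have hsplit : aeval B g
        = aeval B (u * ((X - Polynomial.C μ) ^ m * g)) + aeval B (v * (r * g)) := by
      rw [← _root_.map_add]
      congr 1
      calc g = (u * (X - Polynomial.C μ) ^ m + v * r) * g := by rw [huv, one_mul]
        _ = u * ((X - Polynomial.C μ) ^ m * g) + v * (r * g) := by ring
    -- term 1 : killed by r
    have hkill1 : aeval B (r * (u * ((X - Polynomial.C μ) ^ m * g))) = 0 := by
      have h : r * (u * ((X - Polynomial.C μ) ^ m * g)) = u * (p * g) := by
        rw [← hfac]; ring
      rw [h, _root_.map_mul, hg, mul_zero]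
    have hrootr : ∀ z : ℂ, r.IsRoot z →
        ‖z‖ < 1 ∨ (‖z‖ = 1 ∧ r.rootMultiplicity z = 1) := by
      intro z hz
      have hzp : p.IsRoot z := by
        rw [← hfac]
        simp [IsRoot, eval_mul] at hz ⊢
        right; exact hz
      have hmul : p.rootMultiplicity z
          = rootMultiplicity z ((X - Polynomial.C μ) ^ m) + r.rootMultiplicity z := by
        rw [← hfac]
        exact rootMultiplicity_mul (hfac ▸ hp0)
      rcases hroot z hzp with h | ⟨h1, h2⟩
      · exact Or.inl h
      · refine Or.inr ⟨h1, ?_⟩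
        have hge : 1 ≤ r.rootMultiplicity z := (rootMultiplicity_pos hr0).2 hz
        omega
    have hdegr : r.natDegree ≤ d := by omega
    obtain ⟨c1, hc1⟩ := ih r hdegr hr0 hrootr _ hkill1
    -- term 2 : killed by (X - C μ)^m
    have hkill2 : aeval B ((X - Polynomial.C μ) ^ m * (v * (r * g))) = 0 := by
      have h : (X - Polynomial.C μ) ^ m * (v * (r * g)) = v * (p * g) := by
        rw [← hfac]; ring
      rw [h, _root_.map_mul, hg, mul_zero]
    have hkbd : ∀ k : ℕ, ∃ c : ℝ, ∀ t : ℕ, k < m →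
        (t.choose k : ℝ) * ‖μ‖ ^ (t - k) ≤ c := by
      intro k
      rcases hroot μ hμ with h | ⟨h1, h2⟩
      · obtain ⟨c, hc⟩ := chooseBdd k (norm_nonneg μ) h
        exact ⟨c, fun t _ => hc t⟩
      · refine ⟨1, fun t hkm => ?_⟩
        have hk0 : k = 0 := by omega
        subst hk0
        simp [h1]
    obtain ⟨c2, hc2⟩ := singleFactor B μ m hkbd _ hkill2
    refine ⟨c1 + c2, fun t => ?_⟩
    rw [hsplit, mul_add]
    exact (norm_add_le _ _).trans (add_le_add (hc1 t) (hc2 t))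

end RingInst

noncomputable def psiA (n : ℕ) :
    Matrix (Fin n) (Fin n) ℝ →ₐ[ℝ] Matrix (Fin n) (Fin n) ℂ :=
  AlgHom.mapMatrix (Algebra.ofId ℝ ℂ)

lemma psiA_apply (M : Matrix (Fin n) (Fin n) ℝ) :
    psiA n M = M.map (algebraMap ℝ ℂ) := rfl

lemma psiA_inj : Function.Injective (psiA n) := by
  intro M N h
  ext i j
  have := congrFun (congrFun (congrArg Matrix.of.symm h) i) j
  simpa [psiA_apply, Matrix.map_apply] using
    Complex.ofReal_injective (by simpa [psiA_apply, Matrix.map_apply] using congrFun (congrFun h i) j)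

lemma minpoly_map_eq (A : Matrix (Fin n) (Fin n) ℝ) :
    minpoly ℂ (A.map (algebraMap ℝ ℂ)) = (minpoly ℝ A).map (algebraMap ℝ ℂ) := by
  set B := A.map (algebraMap ℝ ℂ) with hB
  have hint : IsIntegral ℝ A := IsIntegral.of_finite ℝ A
  have hintB : IsIntegral ℂ B := IsIntegral.of_finite ℂ B
  set P := minpoly ℝ A with hP
  set Q := minpoly ℂ B with hQ
  have hBpsi : B = psiA n A := rfl
  -- Q divides P.map
  have h1 : aeval B (P.map (algebraMap ℝ ℂ)) = 0 := by
    rw [aeval_map_algebraMap, hBpsi, aeval_algHom_apply, minpoly.aeval, map_zero]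
  have hQP : Q ∣ P.map (algebraMap ℝ ℂ) := minpoly.dvd ℂ B h1
  -- conjugation invariance
  set σ := starRingEnd ℂ with hσ
  have hBc : B.map σ = B := by
    ext i j
    simp [hB, hσ, Matrix.map_apply, Complex.conj_ofReal]
  have h2 : aeval B (Q.map σ) = 0 := by
    have hhom := Polynomial.hom_eval₂ Q (algebraMap ℂ (Matrix (Fin n) (Fin n) ℂ))
      (σ.mapMatrix) B
    have hcomp : (σ.mapMatrix).comp (algebraMap ℂ (Matrix (Fin n) (Fin n) ℂ))
        = (algebraMap ℂ (Matrix (Fin n) (Fin n) ℂ)).comp σ := by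
      ext c i j
      simp only [RingHom.mapMatrix_apply, RingHom.coe_comp, Function.comp_apply,
        Matrix.map_apply, Matrix.algebraMap_matrix_apply, apply_ite]
      split_ifs <;> simp_all
    have h0 : σ.mapMatrix (eval₂ (algebraMap ℂ _) B Q) = 0 := by
      have : eval₂ (algebraMap ℂ (Matrix (Fin n) (Fin n) ℂ)) B Q = 0 := by
        rw [← aeval_def, minpoly.aeval]
      rw [this, map_zero]
    rw [hhom, hcomp] at h0
    rw [aeval_def, eval₂_map]
    rwa [RingHom.mapMatrix_apply, hBc] at h0
  have hQQc : Q ∣ Q.map σ := minpoly.dvd ℂ B h2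
  have hQmonic : Q.Monic := minpoly.monic hintB
  have hQcmonic : (Q.map σ).Monic := hQmonic.map σ
  have hdeg : (Q.map σ).natDegree = Q.natDegree := natDegree_map σ
  have hQc : Q.map σ = Q := by
    obtain ⟨w, hw⟩ := hQQc
    have hQ0 : Q ≠ 0 := hQmonic.ne_zero
    have hw0 : w ≠ 0 := by
      intro h
      rw [h, mul_zero] at hw
      exact hQcmonic.ne_zero hw
    have hdw : w.natDegree = 0 := by
      have := natDegree_mul hQ0 hw0
      rw [← hw, hdeg] at this
      omega
    have hwC : w = Polynomial.C (w.coeff 0) := eq_C_of_natDegree_eq_zero hdw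
    have hlc : w.coeff 0 = 1 := by
      have := hQcmonic.leadingCoeff
      rw [hw, leadingCoeff_mul, hQmonic.leadingCoeff, one_mul] at this
      rwa [hwC, leadingCoeff_C] at this
    rw [hw, hwC, hlc, Polynomial.C_1, mul_one]
  -- Q has real coefficients
  have hlift : Q ∈ Polynomial.lifts (algebraMap ℝ ℂ) := by
    rw [lifts_iff_coeff_lifts]
    intro k
    have : σ (Q.coeff k) = Q.coeff k := by
      conv_rhs => rw [← hQc]
      rw [coeff_map]
    refine ⟨(Q.coeff k).re, ?_⟩
    have him : (Q.coeff k).im = 0 := by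
      have := congrArg Complex.im this
      simp [hσ, Complex.conj_im] at this
      linarith [this]
    simp [Complex.ext_iff, him]
  obtain ⟨Q0, hQ0map⟩ := (Polynomial.mem_lifts _).1 hlift
  have haevalA : aeval A Q0 = 0 := by
    apply psiA_inj
    rw [map_zero]
    have : aeval (psiA n A) Q0 = psiA n (aeval A Q0) := aeval_algHom_apply (psiA n) A Q0
    rw [← this, ← hBpsi]
    have : aeval B (Q0.map (algebraMap ℝ ℂ)) = aeval B Q0 := aeval_map_algebraMap ℂ B Q0
    rw [← this, hQ0map]
    exact minpoly.aeval ℂ B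
  have hPQ0 : P ∣ Q0 := minpoly.dvd ℝ A haevalA
  have hPQ : P.map (algebraMap ℝ ℂ) ∣ Q := by
    rw [← hQ0map]
    exact Polynomial.map_dvd _ hPQ0
  exact eq_of_monic_of_associated hQmonic ((minpoly.monic hint).map _)
    (associated_of_dvd_dvd hQP hPQ)

section RingInst2
attribute [local instance] Matrix.linftyOpNormedAddCommGroup Matrix.linftyOpNormedRing
  Matrix.linftyOpNormedAlgebra

lemma norm_map_ofReal (M : Matrix (Fin n) (Fin n) ℝ) :
    ‖M.map (algebraMap ℝ ℂ)‖ = ‖M‖ := by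
  rw [Matrix.linfty_opNorm_def, Matrix.linfty_opNorm_def]
  congr 1
  refine Finset.sup_congr rfl fun i _ => ?_
  refine Finset.sum_congr rfl fun j _ => ?_
  simp [Matrix.map_apply]

lemma unbounded1 (B : Matrix (Fin n) (Fin n) ℂ) (z : ℂ) (h1 : 1 < ‖z‖)
    (N : Matrix (Fin n) (Fin n) ℂ) (hN : N ≠ 0) (hBN : B * N = z • N)
    (c : ℝ) (hc : ∀ t : ℕ, ‖B ^ t‖ ≤ c) : False := by
  have key : ∀ t : ℕ, B ^ t * N = z ^ t • N := by
    intro t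
    induction t with
    | zero => simp
    | succ t ih =>
      rw [pow_succ', mul_assoc, ih, mul_smul_comm, hBN, smul_smul, ← pow_succ]
  have hNpos : 0 < ‖N‖ := norm_pos_iff.2 hN
  have hbd : ∀ t : ℕ, ‖z‖ ^ t ≤ c := by
    intro t
    have h1' : ‖z ^ t • N‖ = ‖z‖ ^ t * ‖N‖ := by
      rw [norm_smul, norm_pow]
    have h2 : ‖B ^ t * N‖ ≤ c * ‖N‖ :=
      le_trans (norm_mul_le _ _) (mul_le_mul_of_nonneg_right (hc t) (norm_nonneg _))
    rw [key t, h1'] at h2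
    exact le_of_mul_le_mul_right h2 hNpos
  obtain ⟨t, ht⟩ := pow_unbounded_of_one_lt c h1
  exact absurd (hbd t) (not_le.2 ht)

lemma unbounded2 (B : Matrix (Fin n) (Fin n) ℂ) (z : ℂ) (h1 : ‖z‖ = 1)
    (N DN : Matrix (Fin n) (Fin n) ℂ) (hDN : DN ≠ 0)
    (hBN : B * N = z • N + DN) (hBDN : B * DN = z • DN)
    (c : ℝ) (hc : ∀ t : ℕ, ‖B ^ t‖ ≤ c) : False := by
  have key : ∀ t : ℕ, B ^ (t + 1) * N = z ^ (t + 1) • N + (((t : ℂ) + 1) * z ^ t) • DN := by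
    intro t
    induction t with
    | zero => simpa using hBN
    | succ t ih =>
      rw [pow_succ' B (t + 1), mul_assoc, ih, mul_add, mul_smul_comm, mul_smul_comm,
        hBN, hBDN, smul_add, smul_smul, smul_smul, ← pow_succ,
        add_assoc, ← add_smul]
      congr 1
      push_cast
      ring
  have hbound : ∀ t : ℕ, ((t : ℝ) + 1) * ‖DN‖ ≤ c * ‖N‖ + ‖N‖ := by
    intro t
    have heq : (((t : ℂ) + 1) * z ^ t) • DN = B ^ (t + 1) * N - z ^ (t + 1) • N := by
      rw [key t]; abel
    have hn1 : ‖(((t : ℂ) + 1) * z ^ t) • DN‖ = ((t : ℝ) + 1) * ‖DN‖ := by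
      rw [norm_smul, norm_mul, norm_pow, h1, one_pow, mul_one]
      congr 1
      have : ((t : ℂ) + 1) = ((t + 1 : ℕ) : ℂ) := by push_cast; ring
      rw [this, Complex.norm_natCast]
      push_cast
      ring
    have hn2 : ‖B ^ (t + 1) * N - z ^ (t + 1) • N‖ ≤ c * ‖N‖ + ‖N‖ := by
      refine (norm_sub_le _ _).trans (add_le_add ?_ ?_)
      · exact le_trans (norm_mul_le _ _) (mul_le_mul_of_nonneg_right (hc _) (norm_nonneg _))
      · rw [norm_smul, norm_pow, h1, one_pow, one_mul]
    rw [heq] at hn1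
    rw [← hn1]
    exact hn2
  have hDNpos : 0 < ‖DN‖ := norm_pos_iff.2 hDN
  obtain ⟨t, ht⟩ := exists_nat_gt ((c * ‖N‖ + ‖N‖) / ‖DN‖)
  have h2 : (c * ‖N‖ + ‖N‖) / ‖DN‖ < (t : ℝ) + 1 := ht.trans (by linarith)
  rw [div_lt_iff₀ hDNpos] at h2
  exact absurd (hbound t) (not_le.2 (by linarith))

end RingInst2

end AuxiliaryLemmas

/-- For a real n×n matrix `A`, `sup_{t ∈ ℕ} ‖A^t‖ < ∞` iff every (complex) root of the
minimal polynomial of `A` is strictly inside the unit circle, or on the unit circle and simple. -/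
theorem stmt1 (n : ℕ) (A : Matrix (Fin n) (Fin n) ℝ) :
    (∃ C : ℝ, ∀ t : ℕ, ‖A ^ t‖ ≤ C) ↔
      ∀ z : ℂ, ((minpoly ℝ A).map (algebraMap ℝ ℂ)).IsRoot z →
        ‖z‖ < 1 ∨
          (‖z‖ = 1 ∧ ((minpoly ℝ A).map (algebraMap ℝ ℂ)).rootMultiplicity z = 1) := by
  set B : Matrix (Fin n) (Fin n) ℂ := A.map (algebraMap ℝ ℂ) with hBdef
  have hint : IsIntegral ℝ A := IsIntegral.of_finite ℝ A
  set p : ℂ[X] := (minpoly ℝ A).map (algebraMap ℝ ℂ) with hpdef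
  have hp0 : p ≠ 0 := Polynomial.map_ne_zero (minpoly.ne_zero hint)
  have hpow : ∀ t : ℕ, (A ^ t).map (algebraMap ℝ ℂ) = B ^ t := by
    intro t
    rw [← psiA_apply, _root_.map_pow, psiA_apply]
  have hnorm : ∀ t : ℕ, ‖B ^ t‖ = ‖A ^ t‖ := fun t => by rw [← hpow t, norm_map_ofReal]
  have haeval : aeval B p = 0 := by
    rw [hpdef, aeval_map_algebraMap]
    show aeval B (minpoly ℝ A) = 0
    rw [show B = psiA n A from rfl, aeval_algHom_apply, minpoly.aeval, map_zero]
  constructor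
  · rintro ⟨c, hc⟩ z hz
    have hcB : ∀ t : ℕ, ‖B ^ t‖ ≤ c := fun t => (hnorm t) ▸ hc t
    by_contra hcon
    push_neg at hcon
    obtain ⟨hge, himp⟩ := hcon
    have hmin : minpoly ℂ B = p := minpoly_map_eq A
    have hq : (X - Polynomial.C z) * (p /ₘ (X - Polynomial.C z)) = p :=
      mul_divByMonic_eq_iff_isRoot.2 hz
    set q : ℂ[X] := p /ₘ (X - Polynomial.C z) with hqdef
    have hq0 : q ≠ 0 := by
      intro h
      rw [h, mul_zero] at hq
      exact hp0 hq.symm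
    have hdegq : p.natDegree = 1 + q.natDegree := by
      rw [← hq, natDegree_mul (X_sub_C_ne_zero z) hq0, natDegree_X_sub_C]
    have hqB : aeval B q ≠ 0 := by
      intro h
      have hdvd : p ∣ q := hmin ▸ minpoly.dvd ℂ B h
      have := natDegree_le_of_dvd hdvd hq0
      omega
    have habs1 : 1 ≤ ‖z‖ := hge
    have hBq : B * aeval B q = z • aeval B q := by
      have hXq : (X : ℂ[X]) * q = Polynomial.C z * q + (X - Polynomial.C z) * q := by ring
      have h := congrArg (aeval B) hXq
      rw [_root_.map_mul, aeval_X, _root_.map_add, _root_.map_mul, aeval_C, hq, haeval,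
        add_zero, ← Algebra.smul_def] at h
      exact h
    rcases lt_or_eq_of_le habs1 with hlt | heq
    · exact unbounded1 B z hlt (aeval B q) hqB hBq c hcB
    · have habs : ‖z‖ = 1 := heq.symm
      have hne : (X - Polynomial.C z) * q ≠ 0 := by rw [hq]; exact hp0
      have hmultp : p.rootMultiplicity z = 1 + q.rootMultiplicity z := by
        conv_lhs => rw [← hq]
        rw [rootMultiplicity_mul hne, rootMultiplicity_X_sub_C_self]
      have hm2 : 1 ≤ rootMultiplicity z q := by
        have hne1 := himp habs
        have hpos : 1 ≤ p.rootMultiplicity z := (rootMultiplicity_pos hp0).2 hz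
        omega
      have hrootq : q.IsRoot z := (rootMultiplicity_pos hq0).1 hm2
      have hs : (X - Polynomial.C z) * (q /ₘ (X - Polynomial.C z)) = q :=
        mul_divByMonic_eq_iff_isRoot.2 hrootq
      set s : ℂ[X] := q /ₘ (X - Polynomial.C z) with hsdef
      have hBs : B * aeval B s = z • aeval B s + aeval B q := by
        have hXs : (X : ℂ[X]) * s = Polynomial.C z * s + (X - Polynomial.C z) * s := by ring
        have h := congrArg (aeval B) hXs
        rw [_root_.map_mul, aeval_X, _root_.map_add, _root_.map_mul, aeval_C, hs,
          ← Algebra.smul_def] at h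
        exact h
      exact unbounded2 B z habs (aeval B s) (aeval B q) hqB hBs hBq c hcB
  · intro hroot
    obtain ⟨c, hc⟩ := matrixBound B p.natDegree p le_rfl hp0 hroot 1
      (by rw [mul_one]; exact haeval)
    refine ⟨c, fun t => ?_⟩
    have h := hc t
    rw [_root_.map_one, mul_one] at h
    rw [← hnorm t]
    exact h
end

section
/- Let p be a complex polynomial with no root on the imaginary axis. Then the total variation of the argument of p(iy) as y runs from −∞ to +∞, divided by π, equals τ_s − τ_u, where τ_s is the number of roots of p (with multiplicity) with negative real part and τ_u the number with positive real part. -/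
open Polynomial Filter Complex


noncomputable def phi8 (a : ℂ) (y : ℝ) : ℝ :=
  if a.re < 0 then ((y:ℂ)*Complex.I - a).arg
  else (a - (y:ℂ)*Complex.I).arg + Real.pi

lemma mem_slit_left {a : ℂ} (h : a.re < 0) (y : ℝ) :
    (y:ℂ)*Complex.I - a ∈ Complex.slitPlane := by
  rw [Complex.mem_slitPlane_iff]
  left
  simp only [Complex.sub_re, Complex.mul_re, Complex.ofReal_re, Complex.I_re,
    Complex.ofReal_im, Complex.I_im]
  simp
  linarith

lemma mem_slit_right {a : ℂ} (h : 0 < a.re) (y : ℝ) :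
    a - (y:ℂ)*Complex.I ∈ Complex.slitPlane := by
  rw [Complex.mem_slitPlane_iff]
  left
  simp only [Complex.sub_re, Complex.mul_re, Complex.ofReal_re, Complex.I_re,
    Complex.ofReal_im, Complex.I_im]
  simp
  linarith

lemma phi8_spec (a : ℂ) (y : ℝ) :
    ((‖(y:ℂ)*Complex.I - a‖ : ℝ) : ℂ) * Complex.exp ((phi8 a y : ℂ) * Complex.I)
      = (y:ℂ)*Complex.I - a := by
  unfold phi8
  split_ifs with h
  · exact Complex.norm_mul_exp_arg_mul_I _
  · push_cast
    rw [add_mul, Complex.exp_add, Complex.exp_pi_mul_I]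
    have habs : ‖(y:ℂ)*Complex.I - a‖ = ‖a - (y:ℂ)*Complex.I‖ := by
      exact norm_sub_rev _ _
    rw [habs]
    have h2 := Complex.norm_mul_exp_arg_mul_I (a - (y:ℂ)*Complex.I)
    linear_combination (-1 : ℂ) * h2

lemma phi8_left {a : ℂ} (h : a.re < 0) :
    phi8 a = fun y : ℝ => ((y:ℂ)*Complex.I - a).arg :=
  funext fun y => by simp only [phi8, if_pos h]

lemma phi8_right {a : ℂ} (h : ¬ a.re < 0) :
    phi8 a = fun y : ℝ => (a - (y:ℂ)*Complex.I).arg + Real.pi :=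
  funext fun y => by simp only [phi8, if_neg h]

lemma phi8_cont {a : ℂ} (ha : a.re ≠ 0) : Continuous (phi8 a) := by
  rcases lt_or_gt_of_ne ha with h | h
  · rw [phi8_left h]
    refine continuous_iff_continuousAt.2 fun y => ?_
    exact ContinuousAt.comp (g := Complex.arg) (f := fun y : ℝ => (y:ℂ)*Complex.I - a) (x := y)
      (Complex.continuousAt_arg (mem_slit_left h y))
      ((Complex.continuous_ofReal.mul continuous_const).sub continuous_const).continuousAt
  · rw [phi8_right (not_lt.2 h.le)]
    refine Continuous.add ?_ continuous_const
    refine continuous_iff_continuousAt.2 fun y => ?_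
    exact ContinuousAt.comp (g := Complex.arg) (f := fun y : ℝ => a - (y:ℂ)*Complex.I) (x := y)
      (Complex.continuousAt_arg (mem_slit_right h y))
      (continuous_const.sub (Complex.continuous_ofReal.mul continuous_const)).continuousAt

lemma key8 (b c : ℂ) (hc : c ∈ Complex.slitPlane) :
    Tendsto (fun t : ℝ => (b + (t:ℂ)*c).arg) atTop (nhds c.arg) := by
  have h0 : Tendsto (fun t : ℝ => c + b/(t:ℂ)) atTop (nhds c) := by
    have h1 : Tendsto (fun t : ℝ => ((t⁻¹ : ℝ) : ℂ)) atTop (nhds 0) := by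
      have := tendsto_inv_atTop_zero (𝕜 := ℝ)
      exact (Complex.continuous_ofReal.tendsto 0).comp this
    have h2 : Tendsto (fun t : ℝ => b * ((t⁻¹:ℝ):ℂ)) atTop (nhds 0) := by
      simpa using h1.const_mul b
    have h3 : Tendsto (fun t : ℝ => c + b * ((t⁻¹:ℝ):ℂ)) atTop (nhds (c + 0)) :=
      tendsto_const_nhds.add h2
    simpa [div_eq_mul_inv] using h3
  have h3 : Tendsto (fun t : ℝ => (c + b/(t:ℂ)).arg) atTop (nhds c.arg) :=
    (Complex.continuousAt_arg hc).tendsto.comp h0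
  refine h3.congr' ?_
  filter_upwards [eventually_gt_atTop (0:ℝ)] with t ht
  have ht' : (t:ℂ) ≠ 0 := by exact_mod_cast ht.ne'
  have he : c + b/(t:ℂ) = ((t:ℝ):ℂ)⁻¹ * (b + (t:ℂ)*c) := by
    field_simp; ring
  rw [he, ← Complex.ofReal_inv, Complex.arg_real_mul _ (by positivity)]

lemma phi8_top {a : ℂ} (ha : a.re ≠ 0) :
    Tendsto (phi8 a) atTop (nhds (Real.pi/2)) := by
  rcases lt_or_gt_of_ne ha with h | h
  · rw [phi8_left h]
    have hk := key8 (-a) Complex.I (by rw [Complex.mem_slitPlane_iff]; right; simp)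
    rw [Complex.arg_I] at hk
    refine hk.congr fun y => ?_
    congr 1; ring
  · rw [phi8_right (not_lt.2 h.le)]
    have hk := key8 a (-Complex.I) (by rw [Complex.mem_slitPlane_iff]; right; simp)
    rw [Complex.arg_neg_I] at hk
    have h2 := hk.add (tendsto_const_nhds : Tendsto (fun _ : ℝ => Real.pi) atTop (nhds Real.pi))
    have he : -(Real.pi/2) + Real.pi = Real.pi/2 := by ring
    rw [he] at h2
    refine h2.congr fun y => ?_
    congr 2; ring

lemma phi8_bot {a : ℂ} (ha : a.re ≠ 0) :
    Tendsto (phi8 a) atBot (nhds (if a.re < 0 then -(Real.pi/2) else 3*Real.pi/2)) := by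
  have hneg : Tendsto (fun y : ℝ => -y) atBot atTop := tendsto_neg_atBot_atTop
  rw [apply_ite nhds]
  rcases lt_or_gt_of_ne ha with h | h
  · rw [phi8_left h, if_pos h]
    have hk := (key8 (-a) (-Complex.I)
      (by rw [Complex.mem_slitPlane_iff]; right; simp)).comp hneg
    rw [Complex.arg_neg_I] at hk
    refine hk.congr fun y => ?_
    simp only [Function.comp]
    congr 1; push_cast; ring
  · rw [phi8_right (not_lt.2 h.le), if_neg (not_lt.2 h.le)]
    have hk := ((key8 a Complex.I
      (by rw [Complex.mem_slitPlane_iff]; right; simp)).comp hneg).add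
      (tendsto_const_nhds : Tendsto (fun _ : ℝ => Real.pi) atBot (nhds Real.pi))
    rw [Complex.arg_I] at hk
    have he : Real.pi/2 + Real.pi = 3*Real.pi/2 := by ring
    rw [he] at hk
    refine hk.congr fun y => ?_
    simp only [Function.comp]
    congr 2; push_cast; ring

lemma multiset_tendsto_sum8 {ι : Type*} (s : Multiset ι) {l : Filter ℝ} (f : ι → ℝ → ℝ) (g : ι → ℝ)
    (h : ∀ a ∈ s, Tendsto (f a) l (nhds (g a))) :
    Tendsto (fun y => (s.map fun a => f a y).sum) l (nhds (s.map g).sum) := by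
  induction s using Multiset.induction with
  | empty => simpa using tendsto_const_nhds
  | cons a s ih =>
      simp only [Multiset.map_cons, Multiset.sum_cons]
      exact (h a (Multiset.mem_cons_self a s)).add
        (ih fun b hb => h b (Multiset.mem_cons_of_mem hb))

lemma multiset_cont_sum8 {ι : Type*} (s : Multiset ι) (f : ι → ℝ → ℝ)
    (h : ∀ a ∈ s, Continuous (f a)) :
    Continuous fun y => (s.map fun a => f a y).sum := by
  induction s using Multiset.induction with
  | empty => simpa using continuous_const
  | cons a s ih =>
      simp only [Multiset.map_cons, Multiset.sum_cons]
      exact (h a (Multiset.mem_cons_self a s)).add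
        (ih fun b hb => h b (Multiset.mem_cons_of_mem hb))

lemma exp_multiset_sum8 (s : Multiset ℝ) :
    Complex.exp ((s.sum : ℝ) * Complex.I)
      = (s.map fun x : ℝ => Complex.exp ((x:ℂ) * Complex.I)).prod := by
  induction s using Multiset.induction with
  | empty => simp
  | cons a s ih =>
      simp only [Multiset.map_cons, Multiset.prod_cons, Multiset.sum_cons]
      push_cast
      rw [add_mul, Complex.exp_add, ih]

lemma int_mul_const8 {f : ℝ → ℝ} (hf : Continuous f)
    (h : ∀ y, ∃ n : ℤ, f y = n * (2 * Real.pi)) (x y : ℝ) : f x = f y := by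
  have hπ := Real.pi_pos
  have key : ∀ u v : ℝ, f u < f v → False := by
    intro u v huv
    obtain ⟨n, hn⟩ := h u
    obtain ⟨m, hm⟩ := h v
    have hnm : (n:ℝ) < m := by nlinarith
    have hnm' : (n:ℤ) < m := by exact_mod_cast hnm
    have hnm1 : (n:ℝ) + 1 ≤ m := by exact_mod_cast hnm'
    have hmem : f u + Real.pi ∈ Set.Icc (f u) (f v) := ⟨by linarith, by nlinarith⟩
    obtain ⟨w, hw⟩ := intermediate_value_univ u v hf hmem
    obtain ⟨k, hk⟩ := h w
    have hz : Real.pi * (2*(k:ℝ) - (2*(n:ℝ)+1)) = 0 := by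
      rw [hk] at hw; linarith [hw]
    have h2 : 2*(k:ℝ) = 2*(n:ℝ)+1 := by
      rcases mul_eq_zero.1 hz with h'|h'
      · exact absurd h' hπ.ne'
      · linarith
    have : (2*k : ℤ) = 2*n+1 := by exact_mod_cast h2
    omega
  rcases lt_trichotomy (f x) (f y) with h'|h'|h'
  · exact (key x y h').elim
  · exact h'
  · exact (key y x h').elim

lemma sum_pm8 (s : Multiset ℂ) (hs : ∀ a ∈ s, a.re ≠ 0) :
    (s.map fun a => (if a.re < 0 then Real.pi else -Real.pi)).sum
      = Real.pi * (((s.filter fun z => z.re < 0).card : ℝ)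
          - ((s.filter fun z => 0 < z.re).card : ℝ)) := by
  induction s using Multiset.induction with
  | empty => simp
  | cons a s ih =>
      have ha := hs a (Multiset.mem_cons_self a s)
      have ih' := ih fun b hb => hs b (Multiset.mem_cons_of_mem hb)
      by_cases h : a.re < 0
      · rw [Multiset.map_cons, Multiset.sum_cons, if_pos h,
          Multiset.filter_cons_of_pos (p := fun z : ℂ => z.re < 0) _ h,
          Multiset.filter_cons_of_neg (p := fun z : ℂ => 0 < z.re) _ (by simp; linarith),
          Multiset.card_cons, ih']
        push_cast
        ring
      · have h0 : 0 < a.re := lt_of_le_of_ne (not_lt.1 h) (Ne.symm ha)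
        rw [Multiset.map_cons, Multiset.sum_cons, if_neg h,
          Multiset.filter_cons_of_neg (p := fun z : ℂ => z.re < 0) _ h,
          Multiset.filter_cons_of_pos (p := fun z : ℂ => 0 < z.re) _ h0,
          Multiset.card_cons, ih']
        push_cast
        ring

/-- Routh–Hurwitz argument principle: for a nonzero complex polynomial `p` with no root on the
imaginary axis, the total variation of a continuous argument branch `θ` of `y ↦ p(iy)` from
`−∞` to `+∞`, divided by `π`, equals `τ_s − τ_u` (roots counted with multiplicity). -/
theorem stmt8 (p : Polynomial ℂ) (hp : p ≠ 0)
    (himag : ∀ z : ℂ, p.IsRoot z → z.re ≠ 0)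
    (θ : ℝ → ℝ) (hθ : Continuous θ)
    (hbranch : ∀ y : ℝ,
      p.eval ((y : ℂ) * Complex.I) =
        (‖p.eval ((y : ℂ) * Complex.I)‖ : ℂ) * Complex.exp ((θ y : ℂ) * Complex.I))
    (Lp Lm : ℝ)
    (hLp : Tendsto θ atTop (nhds Lp)) (hLm : Tendsto θ atBot (nhds Lm)) :
    Lp - Lm =
      Real.pi * (((p.roots.filter fun z => z.re < 0).card : ℝ) -
        ((p.roots.filter fun z => 0 < z.re).card : ℝ)) := by
  set c := p.leadingCoeff with hc
  have hroots : Multiset.card p.roots = p.natDegree :=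
    (Polynomial.splits_iff_card_roots).1 (IsAlgClosed.splits p)
  have hfac := Polynomial.C_leadingCoeff_mul_prod_multiset_X_sub_C hroots
  have heval : ∀ z : ℂ, p.eval z = c * (p.roots.map fun a => z - a).prod := by
    intro z
    conv_lhs => rw [← hfac]
    rw [Polynomial.eval_mul, Polynomial.eval_C, Polynomial.eval_multiset_prod,
      Multiset.map_map]
    simp [Function.comp, hc]
  have hre : ∀ a ∈ p.roots, a.re ≠ 0 := fun a ha =>
    himag a (Polynomial.isRoot_of_mem_roots ha)
  set Θ : ℝ → ℝ := fun y => c.arg + (p.roots.map fun a => phi8 a y).sum with hΘdef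
  -- Θ is a branch
  have hΘbranch : ∀ y : ℝ, p.eval ((y:ℂ)*Complex.I)
      = (‖p.eval ((y:ℂ)*Complex.I)‖ : ℂ) * Complex.exp ((Θ y : ℂ)*Complex.I) := by
    intro y
    rw [heval ((y:ℂ)*Complex.I)]
    have e2 : Complex.exp ((Θ y : ℂ)*Complex.I)
        = Complex.exp ((c.arg : ℂ)*Complex.I)
          * (p.roots.map fun a => Complex.exp ((phi8 a y : ℂ)*Complex.I)).prod := by
      show Complex.exp (((c.arg + (p.roots.map fun a => phi8 a y).sum : ℝ) : ℂ)*Complex.I) = _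
      push_cast
      rw [add_mul, Complex.exp_add]
      congr 1
      rw [exp_multiset_sum8 (p.roots.map fun a => phi8 a y), Multiset.map_map]
      rfl
    have e3 : ((‖c * (p.roots.map fun a => (y:ℂ)*Complex.I - a).prod‖ : ℝ) : ℂ)
        = (‖c‖ : ℂ)
          * (p.roots.map fun a => ((‖(y:ℂ)*Complex.I - a‖ : ℝ) : ℂ)).prod := by
      rw [norm_mul]
      push_cast
      congr 1
      rw [show ‖(p.roots.map fun a => (y:ℂ)*Complex.I - a).prod‖
          = (p.roots.map fun a => ‖(y:ℂ)*Complex.I - a‖).prod from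
        (map_multiset_prod (normHom (α := ℂ)) _).trans (by rw [Multiset.map_map]; rfl)]
      exact (map_multiset_prod Complex.ofRealHom _).trans (by rw [Multiset.map_map]; rfl)
    rw [e3, e2]
    rw [show (‖c‖ : ℂ)
          * (p.roots.map fun a => ((‖(y:ℂ)*Complex.I - a‖ : ℝ) : ℂ)).prod
          * (Complex.exp ((c.arg : ℂ)*Complex.I)
            * (p.roots.map fun a => Complex.exp ((phi8 a y : ℂ)*Complex.I)).prod)
        = ((‖c‖ : ℂ) * Complex.exp ((c.arg : ℂ)*Complex.I))
          * ((p.roots.map fun a => ((‖(y:ℂ)*Complex.I - a‖ : ℝ) : ℂ)).prod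
            * (p.roots.map fun a => Complex.exp ((phi8 a y : ℂ)*Complex.I)).prod) from by ring,
      Complex.norm_mul_exp_arg_mul_I, ← Multiset.prod_map_mul]
    congr 1
    rw [Multiset.map_congr rfl fun a _ => (phi8_spec a y).symm]
  -- Θ is continuous
  have hΘcont : Continuous Θ :=
    continuous_const.add (multiset_cont_sum8 p.roots (fun a => phi8 a)
      (fun a ha => phi8_cont (hre a ha)))
  -- limits of Θ
  have hΘtop : Tendsto Θ atTop
      (nhds (c.arg + (p.roots.map fun _ => Real.pi/2).sum)) :=
    tendsto_const_nhds.add (multiset_tendsto_sum8 p.roots _ _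
      (fun a ha => phi8_top (hre a ha)))
  have hΘbot : Tendsto Θ atBot
      (nhds (c.arg + (p.roots.map fun a =>
        if a.re < 0 then -(Real.pi/2) else 3*Real.pi/2).sum)) :=
    tendsto_const_nhds.add (multiset_tendsto_sum8 p.roots _ _
      (fun a ha => phi8_bot (hre a ha)))
  -- θ − Θ is constant
  have hne : ∀ y : ℝ, p.eval ((y:ℂ)*Complex.I) ≠ 0 := by
    intro y hy
    exact himag _ hy (by simp)
  have hd : ∀ y : ℝ, ∃ n : ℤ, θ y - Θ y = n * (2 * Real.pi) := by
    intro y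
    have h1 := hbranch y
    have h2 := hΘbranch y
    have hA : ((‖p.eval ((y:ℂ)*Complex.I)‖ : ℝ) : ℂ) ≠ 0 := by
      simpa using hne y
    have h3 : Complex.exp ((θ y : ℂ)*Complex.I) = Complex.exp ((Θ y : ℂ)*Complex.I) :=
      mul_left_cancel₀ hA (h1.symm.trans h2)
    have h4 : Complex.exp (((θ y - Θ y : ℝ) : ℂ)*Complex.I) = 1 := by
      push_cast
      rw [sub_mul, Complex.exp_sub, h3, div_self (Complex.exp_ne_zero _)]
    obtain ⟨n, hn⟩ := Complex.exp_eq_one_iff.1 h4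
    refine ⟨n, ?_⟩
    have hn' : (((θ y - Θ y : ℝ)) : ℂ) * Complex.I = ((n : ℂ) * (2 * Real.pi)) * Complex.I := by
      rw [hn]; ring
    have h5 := mul_right_cancel₀ Complex.I_ne_zero hn'
    have h6 : (((θ y - Θ y : ℝ)) : ℂ) = ((n * (2 * Real.pi) : ℝ) : ℂ) := by
      rw [h5]; push_cast; ring
    exact_mod_cast h6
  have hconst := int_mul_const8 (hθ.sub hΘcont) hd
  -- identify limits
  have hθeq : ∀ y : ℝ, θ y = Θ y + (θ 0 - Θ 0) := by
    intro y
    have := hconst y 0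
    simp only [Pi.sub_apply] at this
    linarith
  have hLp' : Lp = (c.arg + (p.roots.map fun _ => Real.pi/2).sum) + (θ 0 - Θ 0) := by
    refine tendsto_nhds_unique hLp ?_
    refine (hΘtop.add tendsto_const_nhds).congr fun y => (hθeq y).symm
  have hLm' : Lm = (c.arg + (p.roots.map fun a =>
      if a.re < 0 then -(Real.pi/2) else 3*Real.pi/2).sum) + (θ 0 - Θ 0) := by
    refine tendsto_nhds_unique hLm ?_
    refine (hΘbot.add tendsto_const_nhds).congr fun y => (hθeq y).symm
  rw [hLp', hLm']
  have hsum : (p.roots.map fun _ => Real.pi/2).sum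
      - (p.roots.map fun a => if a.re < 0 then -(Real.pi/2) else 3*Real.pi/2).sum
      = (p.roots.map fun a => if a.re < 0 then Real.pi else -Real.pi).sum := by
    rw [← Multiset.sum_map_sub]
    refine congrArg Multiset.sum (Multiset.map_congr rfl fun a ha => ?_)
    by_cases h : a.re < 0
    · rw [if_pos h, if_pos h]; ring
    · rw [if_neg h, if_neg h]; ring
  rw [show c.arg + (Multiset.map (fun _ => Real.pi/2) p.roots).sum + (θ 0 - Θ 0)
      - (c.arg + (Multiset.map (fun a =>
          if a.re < 0 then -(Real.pi/2) else 3*Real.pi/2) p.roots).sum + (θ 0 - Θ 0))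
      = (Multiset.map (fun _ => Real.pi/2) p.roots).sum
        - (Multiset.map (fun a =>
          if a.re < 0 then -(Real.pi/2) else 3*Real.pi/2) p.roots).sum from by ring,
    hsum]
  exact sum_pm8 p.roots hre
end
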